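/- arXiv:2407.07127 — 6 statements merged into one kernel-verified Lean document; each statement's English description precedes it below -/
import Mathlib

section
/- Let n ∈ ℕ, n ≥ 1. Let η : Fin n → Fin n → ℝ be nonnegative interaction rates, B : Fin n → Fin n → Fin n → ℝ nonnegative transition probabilities satisfying ∑_{i} B i h k = 1 for all h, k, let μ : Fin n → Fin n → ℝ → ℝ and λ : Fin n → ℝ → ℝ be continuous on [0, ∞). Assume there exist constants η̄ > 0, μ̄ > 0, λ̄ > 0 such that η h k ≤ η̄ for all h, k, μ h k t ≤ μ̄ for all h, k and all t > 0, and |λ i t| ≤ λ̄ for all i and all t > 0. Let f⁰ : Fin n → ℝ with f⁰ i ≥ 0 for all i. Then there exists t₀ > 0 and a unique function f : ℝ → (Fin n → ℝ), differentiable on [0, t₀], with f 0 = f⁰, satisfying for all t ∈ [0, t₀] and all i the system (f i)'(t) = ∑_{h,k} η h k · B i h k · f h t · f k t − f i t · ∑_{k} η i k · f k t + f i t · ∑_{k} η i k · μ i k t · f k t + λ i t · f i t; moreover f i t ≥ 0 for all i and all t ∈ [0, t₀], and f is bounded on [0, t₀]. -/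
/-!
The right-hand side is a polynomial in the state whose coefficients depend continuously on
time, so it is Lipschitz in the state, uniformly for times in a compact interval and states in
a compact set. Picard–Lindelöf then gives a local solution, and any two solutions agree.

For positivity, solve instead the system with the state replaced by its positive part `f⁺`.
If `f i ≤ 0`, every term of the `i`-th equation carrying the factor `f i⁺ = 0` vanishes and
only the gain term `∑ η_hk B^i_hk f_h⁺ f_k⁺ ≥ 0` is left, so no component of the truncated
solution can become negative; hence `f⁺ = f` along it and it solves the original system.
Boundedness is continuity on a compact interval.
-/

open Set Filter Topology Metric

section ODE

variable {P E : Type*} [PseudoMetricSpace P] [NormedAddCommGroup E] [NormedSpace ℝ E]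

theorem LocallyLipschitz.exists_lipschitzOnWith_snd {X Y : Type*} [PseudoMetricSpace X]
    [PseudoMetricSpace Y] {F : P × X → Y} (hF : LocallyLipschitz F) {K : Set P}
    (hK : IsCompact K) {S : Set X} (hS : IsCompact S) :
    ∃ L, ∀ p ∈ K, LipschitzOnWith L (fun x => F (p, x)) S := by
  obtain ⟨L, hL⟩ := hF.locallyLipschitzOn.exists_lipschitzOnWith_of_compact (hK.prod hS)
  refine ⟨L, fun p hp => ?_⟩
  simpa only [mul_one, Function.comp_def] using
    hL.comp (LipschitzWith.prodMk_left p).lipschitzOnWith fun x hx => ⟨hp, hx⟩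

theorem exists_hasDerivWithinAt_Icc_of_locallyLipschitz [ProperSpace E] {F : P × E → E}
    (hF : LocallyLipschitz F) {c : ℝ → P} {a b : ℝ} (hab : a < b)
    (hc : ContinuousOn c (Icc a b)) (x₀ : E) :
    ∃ t₁ ∈ Ioc a b, ∃ f : ℝ → E, f a = x₀ ∧
      ∀ t ∈ Icc a t₁, HasDerivWithinAt f (F (c t, f t)) (Icc a t₁) t := by
  have hK : IsCompact (c '' Icc a b) := isCompact_Icc.image_of_continuousOn hc
  have hS : IsCompact (closedBall x₀ 1) := isCompact_closedBall x₀ 1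
  obtain ⟨L, hL⟩ := hF.exists_lipschitzOnWith_snd hK hS
  obtain ⟨M, hM⟩ := (hK.prod hS).exists_bound_of_continuousOn hF.continuous.continuousOn
  set t₁ := min b (a + 1 / (M.toNNReal + 1))
  have ht₁ : t₁ ∈ Ioc a b :=
    ⟨lt_min hab (lt_add_of_pos_right a (by positivity)), min_le_left _ _⟩
  have hsub : Icc a t₁ ⊆ Icc a b := Icc_subset_Icc_right ht₁.2
  have hpl : IsPicardLindelof (fun t x => F (c t, x))
      (⟨a, left_mem_Icc.2 ht₁.1.le⟩ : Icc a t₁) x₀ 1 0 M.toNNReal L := by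
    refine ⟨fun t ht => ?_, fun x _ => ?_, fun t ht x hx => ?_, ?_⟩
    · simpa only [NNReal.coe_one] using hL (c t) (mem_image_of_mem c (hsub ht))
    · exact hF.continuous.comp_continuousOn ((hc.mono hsub).prodMk continuousOn_const)
    · have hx' : x ∈ closedBall x₀ 1 := by simpa only [NNReal.coe_one] using hx
      exact (hM (c t, x) ⟨mem_image_of_mem c (hsub ht), hx'⟩).trans M.le_coe_toNNReal
    · have hlen : t₁ - a ≤ 1 / (M.toNNReal + 1) :=
        sub_le_iff_le_add'.2 (min_le_right _ _)
      simp only [sub_self, max_eq_left (sub_nonneg.2 ht₁.1.le), NNReal.coe_one, NNReal.coe_zero,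
        sub_zero]
      calc (M.toNNReal : ℝ) * (t₁ - a) ≤ M.toNNReal * (1 / (M.toNNReal + 1)) := by gcongr
        _ ≤ 1 := by rw [mul_one_div, div_le_one (by positivity)]; linarith
  obtain ⟨f, hfa, hf⟩ := hpl.exists_eq_forall_mem_Icc_hasDerivWithinAt₀
  exact ⟨t₁, ht₁, f, hfa, hf⟩

theorem ODE_solution_unique_of_hasDerivWithinAt_Icc {F : P × E → E} (hF : LocallyLipschitz F)
    {c : ℝ → P} {a b : ℝ} (hc : ContinuousOn c (Icc a b)) {f g : ℝ → E}
    (hf : ∀ t ∈ Icc a b, HasDerivWithinAt f (F (c t, f t)) (Icc a b) t)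
    (hg : ∀ t ∈ Icc a b, HasDerivWithinAt g (F (c t, g t)) (Icc a b) t)
    (ha : f a = g a) : EqOn f g (Icc a b) := by
  have hfc : ContinuousOn f (Icc a b) := fun t ht => (hf t ht).continuousWithinAt
  have hgc : ContinuousOn g (Icc a b) := fun t ht => (hg t ht).continuousWithinAt
  set S := f '' Icc a b ∪ g '' Icc a b
  obtain ⟨L, hL⟩ := hF.exists_lipschitzOnWith_snd (isCompact_Icc.image_of_continuousOn hc)
    ((isCompact_Icc.image_of_continuousOn hfc).union (isCompact_Icc.image_of_continuousOn hgc))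
  have hIcc : ∀ t ∈ Ico a b, Icc a b ∈ 𝓝[≥] t := fun t ht =>
    mem_of_superset (Icc_mem_nhdsGE_of_mem ⟨le_rfl, ht.2⟩) (Icc_subset_Icc_left ht.1)
  exact ODE_solution_unique_of_mem_Icc_right (s := fun _ => S)
    (fun t ht => hL (c t) (mem_image_of_mem c (Ico_subset_Icc_self ht))) hfc
    (fun t ht => (hf t (Ico_subset_Icc_self ht)).mono_of_mem_nhdsWithin (hIcc t ht))
    (fun t ht => Or.inl (mem_image_of_mem f (Ico_subset_Icc_self ht))) hgc
    (fun t ht => (hg t (Ico_subset_Icc_self ht)).mono_of_mem_nhdsWithin (hIcc t ht))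
    (fun t ht => Or.inr (mem_image_of_mem g (Ico_subset_Icc_self ht))) ha

end ODE

theorem nonneg_of_hasDerivWithinAt_Icc_of_neg {g g' : ℝ → ℝ} {a b : ℝ}
    (hg : ∀ t ∈ Icc a b, HasDerivWithinAt g (g' t) (Icc a b) t) (ha : 0 ≤ g a)
    (hg' : ∀ t ∈ Ioo a b, g t < 0 → 0 ≤ g' t) : ∀ t ∈ Icc a b, 0 ≤ g t := by
  intro t₁ ht₁
  by_contra! hneg
  have hgc : ContinuousOn g (Icc a t₁) := fun t ht =>
    (hg t ⟨ht.1, ht.2.trans ht₁.2⟩).continuousWithinAt.mono (Icc_subset_Icc_right ht₁.2)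
  -- After the last time `s ≤ t₁` with `g s ≥ 0`, `g` is negative, hence nondecreasing, so
  -- `g t₁ ≥ g s ≥ 0`.
  set S := Icc a t₁ ∩ g ⁻¹' Ici 0
  have hS : IsCompact S := isCompact_Icc.of_isClosed_subset
    (hgc.preimage_isClosed_of_isClosed isClosed_Icc isClosed_Ici) inter_subset_left
  set s := sSup S
  have hsS : s ∈ S := hS.sSup_mem ⟨a, left_mem_Icc.2 ht₁.1, ha⟩
  have has : a ≤ s := hsS.1.1
  have hst₁ : s < t₁ := hsS.1.2.lt_of_ne fun h => hneg.not_ge (h ▸ hsS.2)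
  have hlast : ∀ u ∈ Ioc s t₁, g u < 0 := fun u hu => by
    by_contra! hu'
    exact hu.1.not_ge (le_csSup hS.bddAbove ⟨⟨has.trans hu.1.le, hu.2⟩, hu'⟩)
  have hIoo : Ioo s t₁ ⊆ Ioo a b := fun u hu => ⟨has.trans_lt hu.1, hu.2.trans_le ht₁.2⟩
  have hmono : MonotoneOn g (Icc s t₁) := by
    refine monotoneOn_of_hasDerivWithinAt_nonneg (f' := g') (convex_Icc s t₁)
      (hgc.mono (Icc_subset_Icc_left has)) (fun u hu => ?_) (fun u hu => ?_)
    · rw [interior_Icc] at hu ⊢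
      exact (hg u (Ioo_subset_Icc_self (hIoo hu))).mono (hIoo.trans Ioo_subset_Icc_self)
    · rw [interior_Icc] at hu
      exact hg' u (hIoo hu) (hlast u ⟨hu.1, hu.2.le⟩)
  exact hneg.not_ge (hsS.2.trans (hmono ⟨le_rfl, hst₁.le⟩ ⟨hst₁.le, le_rfl⟩ hst₁.le))

theorem lipschitzWith_posPart_pi {ι : Type*} [Fintype ι] :
    LipschitzWith 1 (posPart : (ι → ℝ) → ι → ℝ) :=
  LipschitzWith.of_dist_le_mul fun x y => by
    rw [NNReal.coe_one, one_mul, dist_pi_le_iff dist_nonneg]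
    intro j
    have hj := lipschitzWith_posPart.dist_le_mul (x j) (y j)
    rw [NNReal.coe_one, one_mul] at hj
    simpa only [Pi.posPart_apply] using hj.trans (dist_le_pi_dist x y j)

namespace KineticFramework

abbrev Rates (n : ℕ) : Type := (Fin n → Fin n → ℝ) × (Fin n → ℝ)

variable {n : ℕ} (η : Fin n → Fin n → ℝ) (B : Fin n → Fin n → Fin n → ℝ)

/-- The right-hand side of the kinetic equations at a frozen time: `p.1 i k` plays the role of
`μ_{ik}(t)` and `p.2 i` that of `λ_i(t)`. -/
def kineticField (p : Rates n) (z : Fin n → ℝ) : Fin n → ℝ :=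
  fun i => (∑ h, ∑ k, η h k * B i h k * z h * z k) - z i * (∑ k, η i k * z k)
    + z i * (∑ k, η i k * p.1 i k * z k) + p.2 i * z i

theorem locallyLipschitz_kineticField :
    LocallyLipschitz fun q : Rates n × (Fin n → ℝ) => kineticField η B q.1 q.2 := by
  refine ContDiff.locallyLipschitz (𝕂 := ℝ) (contDiff_pi.2 fun i => ?_)
  unfold kineticField
  fun_prop

theorem locallyLipschitz_kineticField_posPart :
    LocallyLipschitz fun q : Rates n × (Fin n → ℝ) => kineticField η B q.1 q.2⁺ := by
  have htrunc : LocallyLipschitz fun q : Rates n × (Fin n → ℝ) => (q.1, q.2⁺) :=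
    LipschitzWith.prod_fst.locallyLipschitz.prodMk
      (lipschitzWith_posPart_pi.comp LipschitzWith.prod_snd).locallyLipschitz
  have h := (locallyLipschitz_kineticField η B).comp htrunc
  rw [Function.comp_def] at h
  exact h

variable {η B}

theorem kineticField_nonneg_of_eq_zero (hη : ∀ h k, 0 ≤ η h k) (hB : ∀ i h k, 0 ≤ B i h k)
    (p : Rates n) {z : Fin n → ℝ} (hz : 0 ≤ z) {i : Fin n} (hzi : z i = 0) :
    0 ≤ kineticField η B p z i := by
  simp only [kineticField, hzi, zero_mul, mul_zero, sub_zero, add_zero]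
  exact Finset.sum_nonneg fun h _ => Finset.sum_nonneg fun k _ =>
    mul_nonneg (mul_nonneg (mul_nonneg (hη h k) (hB i h k)) (hz h)) (hz k)

theorem exists_nonneg_solution (hη : ∀ h k, 0 ≤ η h k) (hB : ∀ i h k, 0 ≤ B i h k)
    {c : ℝ → Rates n} (hc : ContinuousOn c (Ici 0)) {f₀ : Fin n → ℝ}
    (hf₀ : 0 ≤ f₀) :
    ∃ t₀ > (0 : ℝ), ∃ f : ℝ → Fin n → ℝ, f 0 = f₀ ∧
      (∀ t ∈ Icc 0 t₀, HasDerivWithinAt f (kineticField η B (c t) (f t)) (Icc 0 t₀) t) ∧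
      ∀ t ∈ Icc 0 t₀, 0 ≤ f t := by
  obtain ⟨t₀, ht₀, f, hf0, hf⟩ := exists_hasDerivWithinAt_Icc_of_locallyLipschitz
    (locallyLipschitz_kineticField_posPart η B) zero_lt_one (hc.mono Icc_subset_Ici_self) f₀
  have hfnn : ∀ t ∈ Icc 0 t₀, 0 ≤ f t := fun t ht i => by
    refine nonneg_of_hasDerivWithinAt_Icc_of_neg
      (fun t ht => hasDerivWithinAt_pi.1 (hf t ht) i) (hf0 ▸ hf₀ i) (fun t _ hneg => ?_) t ht
    exact kineticField_nonneg_of_eq_zero hη hB _ (posPart_nonneg _)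
      (by rw [Pi.posPart_apply, posPart_eq_zero]; exact hneg.le)
  refine ⟨t₀, ht₀.1, f, hf0, fun t ht => ?_, hfnn⟩
  simpa only [posPart_eq_self.2 (hfnn t ht)] using hf t ht

end KineticFramework

theorem stmt_0_general (n : ℕ)
    (η : Fin n → Fin n → ℝ) (B : Fin n → Fin n → Fin n → ℝ)
    (μ : Fin n → Fin n → ℝ → ℝ) (lam : Fin n → ℝ → ℝ)
    (hη : ∀ h k, 0 ≤ η h k) (hB : ∀ i h k, 0 ≤ B i h k)
    (hμcont : ∀ h k, ContinuousOn (μ h k) (Ici 0))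
    (hlamcont : ∀ i, ContinuousOn (lam i) (Ici 0))
    (f0 : Fin n → ℝ) (hf0 : ∀ i, 0 ≤ f0 i) :
    ∃ t₀ > (0:ℝ), ∃ f : ℝ → Fin n → ℝ,
      (f 0 = f0 ∧
        (∀ t ∈ Icc (0:ℝ) t₀, ∀ i,
          HasDerivWithinAt (fun s => f s i)
            ((∑ h, ∑ k, η h k * B i h k * f t h * f t k)
              - f t i * (∑ k, η i k * f t k)
              + f t i * (∑ k, η i k * μ i k t * f t k)
              + lam i t * f t i) (Icc (0:ℝ) t₀) t) ∧
        (∀ t ∈ Icc (0:ℝ) t₀, ∀ i, 0 ≤ f t i) ∧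
        (∃ M : ℝ, ∀ t ∈ Icc (0:ℝ) t₀, ∀ i, |f t i| ≤ M)) ∧
      (∀ g : ℝ → Fin n → ℝ,
        g 0 = f0 →
        (∀ t ∈ Icc (0:ℝ) t₀, ∀ i,
          HasDerivWithinAt (fun s => g s i)
            ((∑ h, ∑ k, η h k * B i h k * g t h * g t k)
              - g t i * (∑ k, η i k * g t k)
              + g t i * (∑ k, η i k * μ i k t * g t k)
              + lam i t * g t i) (Icc (0:ℝ) t₀) t) →
        ∀ t ∈ Icc (0:ℝ) t₀, g t = f t) := by
  set c : ℝ → KineticFramework.Rates n := fun t => (fun i k => μ i k t, fun i => lam i t)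
  have hc : ContinuousOn c (Ici 0) :=
    (continuousOn_pi.2 fun i => continuousOn_pi.2 (hμcont i)).prodMk
      (continuousOn_pi.2 hlamcont)
  obtain ⟨t₀, ht₀, f, hf0', hf, hfnn⟩ :=
    KineticFramework.exists_nonneg_solution hη hB hc hf0
  obtain ⟨M, hM⟩ := isCompact_Icc.exists_bound_of_continuousOn fun t ht =>
    (hf t ht).continuousWithinAt
  refine ⟨t₀, ht₀, f, ⟨hf0', fun t ht => hasDerivWithinAt_pi.1 (hf t ht), hfnn,
    M, fun t ht i => (norm_le_pi_norm (f t) i).trans (hM t ht)⟩, fun g hg0 hg t ht => ?_⟩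
  exact ODE_solution_unique_of_hasDerivWithinAt_Icc
    (KineticFramework.locallyLipschitz_kineticField η B) (hc.mono Icc_subset_Ici_self)
    (fun t ht => hasDerivWithinAt_pi.2 (hg t ht)) hf (hg0.trans hf0'.symm) ht

/-- Theorem 1 of the paper: local existence, uniqueness, positivity and boundedness
for the Cauchy problem of the non-conservative kinetic framework. -/
theorem stmt_0 (n : ℕ) (hn : 1 ≤ n)
    (η : Fin n → Fin n → ℝ) (B : Fin n → Fin n → Fin n → ℝ)
    (μ : Fin n → Fin n → ℝ → ℝ) (lam : Fin n → ℝ → ℝ)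
    (hη : ∀ h k, 0 ≤ η h k) (hB : ∀ i h k, 0 ≤ B i h k)
    (hBsum : ∀ h k, ∑ i, B i h k = 1)
    (hμcont : ∀ h k, ContinuousOn (μ h k) (Ici 0))
    (hlamcont : ∀ i, ContinuousOn (lam i) (Ici 0))
    (ηbar : ℝ) (hηbar : 0 < ηbar) (hηle : ∀ h k, η h k ≤ ηbar)
    (μbar : ℝ) (hμbar : 0 < μbar) (hμle : ∀ h k t, 0 < t → μ h k t ≤ μbar)
    (lambar : ℝ) (hlambar : 0 < lambar) (hlamle : ∀ i t, 0 < t → |lam i t| ≤ lambar)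
    (f0 : Fin n → ℝ) (hf0 : ∀ i, 0 ≤ f0 i) :
    ∃ t₀ > (0:ℝ), ∃ f : ℝ → Fin n → ℝ,
      (f 0 = f0 ∧
        (∀ t ∈ Icc (0:ℝ) t₀, ∀ i,
          HasDerivWithinAt (fun s => f s i)
            ((∑ h, ∑ k, η h k * B i h k * f t h * f t k)
              - f t i * (∑ k, η i k * f t k)
              + f t i * (∑ k, η i k * μ i k t * f t k)
              + lam i t * f t i) (Icc (0:ℝ) t₀) t) ∧
        (∀ t ∈ Icc (0:ℝ) t₀, ∀ i, 0 ≤ f t i) ∧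
        (∃ M : ℝ, ∀ t ∈ Icc (0:ℝ) t₀, ∀ i, |f t i| ≤ M)) ∧
      (∀ g : ℝ → Fin n → ℝ,
        g 0 = f0 →
        (∀ t ∈ Icc (0:ℝ) t₀, ∀ i,
          HasDerivWithinAt (fun s => g s i)
            ((∑ h, ∑ k, η h k * B i h k * g t h * g t k)
              - g t i * (∑ k, η i k * g t k)
              + g t i * (∑ k, η i k * μ i k t * g t k)
              + lam i t * g t i) (Icc (0:ℝ) t₀) t) →
        ∀ t ∈ Icc (0:ℝ) t₀, g t = f t) :=
  stmt_0_general n η B μ lam hη hB hμcont hlamcont f0 hf0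
end

section
/- Let n ∈ ℕ, n ≥ 1, let η : Fin n → Fin n → ℝ be nonnegative with η h k ≤ η̄ for some η̄ > 0 and all h, k, and let B : Fin n → Fin n → Fin n → ℝ be nonnegative with ∑_{i} B i h k = 1 for all h, k. Define the gain operator G : (Fin n → ℝ) → (Fin n → ℝ) by (G f) i = ∑_{h,k} η h k · B i h k · f h · f k. Then for every c > 0 and all vectors f, g : Fin n → ℝ with ∑_h |f h| ≤ c and ∑_h |g h| ≤ c, one has ∑_{i} |(G f) i − (G g) i| ≤ 2 η̄ c · ∑_{i} |f i − g i|. -/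
/-- Lipschitz estimate for the gain operator G_i[f] = ∑_{h,k} η_{hk} B^i_{hk} f_h f_k. -/
theorem stmt_1 (n : ℕ) (hn : 1 ≤ n)
    (η : Fin n → Fin n → ℝ) (ηbar : ℝ) (hηbar : 0 < ηbar)
    (hη : ∀ h k, 0 ≤ η h k) (hηle : ∀ h k, η h k ≤ ηbar)
    (B : Fin n → Fin n → Fin n → ℝ) (hB : ∀ i h k, 0 ≤ B i h k)
    (hBsum : ∀ h k, ∑ i, B i h k = 1)
    (c : ℝ) (hc : 0 < c) (f g : Fin n → ℝ)
    (hf : ∑ h, |f h| ≤ c) (hg : ∑ h, |g h| ≤ c) :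
    ∑ i, |(∑ h, ∑ k, η h k * B i h k * f h * f k)
            - (∑ h, ∑ k, η h k * B i h k * g h * g k)|
      ≤ 2 * ηbar * c * ∑ i, |f i - g i| := by
  have hD0 : 0 ≤ ∑ i, |f i - g i| := Finset.sum_nonneg fun i _ => abs_nonneg _
  have habs : ∀ h k : Fin n,
      |f h * f k - g h * g k| ≤ |f h - g h| * |f k| + |g h| * |f k - g k| := by
    intro h k
    have e : f h * f k - g h * g k = (f h - g h) * f k + g h * (f k - g k) := by ring
    rw [e]
    calc |(f h - g h) * f k + g h * (f k - g k)|
        ≤ |(f h - g h) * f k| + |g h * (f k - g k)| := abs_add_le _ _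
      _ = |f h - g h| * |f k| + |g h| * |f k - g k| := by rw [abs_mul, abs_mul]
  calc ∑ i, |(∑ h, ∑ k, η h k * B i h k * f h * f k)
            - (∑ h, ∑ k, η h k * B i h k * g h * g k)|
      ≤ ∑ i, ∑ h, ∑ k, η h k * B i h k * |f h * f k - g h * g k| := by
        apply Finset.sum_le_sum; intro i _
        rw [← Finset.sum_sub_distrib]
        refine (Finset.abs_sum_le_sum_abs _ _).trans (Finset.sum_le_sum fun h _ => ?_)
        rw [← Finset.sum_sub_distrib]
        refine (Finset.abs_sum_le_sum_abs _ _).trans (Finset.sum_le_sum fun k _ => ?_)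
        have e : η h k * B i h k * f h * f k - η h k * B i h k * g h * g k
            = η h k * B i h k * (f h * f k - g h * g k) := by ring
        rw [e, abs_mul, abs_of_nonneg (mul_nonneg (hη h k) (hB i h k))]
    _ = ∑ h, ∑ k, η h k * |f h * f k - g h * g k| := by
        rw [Finset.sum_comm]
        refine Finset.sum_congr rfl fun h _ => ?_
        rw [Finset.sum_comm]
        refine Finset.sum_congr rfl fun k _ => ?_
        calc ∑ i, η h k * B i h k * |f h * f k - g h * g k|
            = ∑ i, B i h k * (η h k * |f h * f k - g h * g k|) := by
              refine Finset.sum_congr rfl fun i _ => by ring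
          _ = (∑ i, B i h k) * (η h k * |f h * f k - g h * g k|) :=
              (Finset.sum_mul _ _ _).symm
          _ = η h k * |f h * f k - g h * g k| := by rw [hBsum]; ring
    _ ≤ ∑ h, ∑ k, ηbar * (|f h - g h| * |f k| + |g h| * |f k - g k|) := by
        refine Finset.sum_le_sum fun h _ => Finset.sum_le_sum fun k _ => ?_
        exact mul_le_mul (hηle h k) (habs h k) (abs_nonneg _)
          (le_of_lt hηbar)
    _ = ηbar * ((∑ h, |f h - g h|) * (∑ k, |f k|)
          + (∑ h, |g h|) * (∑ k, |f k - g k|)) := by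
        have key : ∀ (a b : Fin n → ℝ),
            ∑ h, ∑ k, ηbar * (a h * b k) = ηbar * ((∑ h, a h) * (∑ k, b k)) := by
          intro a b
          rw [Finset.sum_mul_sum, Finset.mul_sum]
          refine Finset.sum_congr rfl fun h _ => ?_
          rw [Finset.mul_sum]
        simp only [mul_add, Finset.sum_add_distrib, key]
    _ ≤ 2 * ηbar * c * ∑ i, |f i - g i| := by
        have hfg : 0 ≤ ∑ k, |f k| := Finset.sum_nonneg fun i _ => abs_nonneg _
        have hgg : 0 ≤ ∑ k, |g k| := Finset.sum_nonneg fun i _ => abs_nonneg _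
        nlinarith [mul_le_mul_of_nonneg_left hf hD0, mul_le_mul_of_nonneg_left hg hD0]
end

section
/- Let n ∈ ℕ, n ≥ 1, let η : Fin n → Fin n → ℝ be nonnegative with η h k ≤ η̄ (η̄ > 0) for all h, k, let B : Fin n → Fin n → Fin n → ℝ be nonnegative with ∑_{i} B i h k = 1 for all h, k, let μ : Fin n → Fin n → ℝ with |μ i k| ≤ μ̄ (μ̄ > 0) for all i, k, and let λ : Fin n → ℝ with |λ i| ≤ λ̄ (λ̄ > 0) for all i. Define the full kinetic operator P : (Fin n → ℝ) → (Fin n → ℝ) by (P f) i = ∑_{h,k} η h k · B i h k · f h · f k − f i · ∑_{k} η i k · f k + f i · ∑_{k} η i k · μ i k · f k + λ i · f i. Then for every c > 0 and all f, g : Fin n → ℝ with ∑_h |f h| ≤ c and ∑_h |g h| ≤ c, one has ∑_{i} |(P f) i − (P g) i| ≤ (4 η̄ c + 2 η̄ μ̄ c + λ̄) · ∑_{i} |f i − g i|. In particular, P is locally Lipschitz on Fin n → ℝ with respect to the ℓ¹ norm. -/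
/-!
Apart from the linear external field, every term of the operator is quadratic in `f`, so its
increment between `f` and `g` is controlled by `∑ h, ∑ k, |f h * f k - g h * g k|`; the splitting
`f h f k - g h g k = f h (f k - g k) + (f h - g h) g k` bounds this by
`(‖f‖₁ + ‖g‖₁) ‖f - g‖₁ ≤ 2 c ‖f - g‖₁`. In the gain term the sum over the output state `i` is
absorbed by `∑ i, B i h k = 1`; the loss and proliferation terms carry the weights `η i k` and
`η i k μ i k`, bounded by `η̄` and `η̄ μ̄`.
-/

open Finset

variable {ι : Type*} [Fintype ι]

theorem sum_sum_abs_mul_sub_mul_le (f g : ι → ℝ) :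
    ∑ h, ∑ k, |f h * f k - g h * g k|
      ≤ (∑ h, |f h| + ∑ h, |g h|) * ∑ h, |f h - g h| := by
  calc ∑ h, ∑ k, |f h * f k - g h * g k|
      ≤ ∑ h, ∑ k, (|f h| * |f k - g k| + |f h - g h| * |g k|) := by
        refine sum_le_sum fun h _ => sum_le_sum fun k _ => ?_
        rw [← abs_mul, ← abs_mul]
        have hsplit : f h * f k - g h * g k = f h * (f k - g k) + (f h - g h) * g k := by ring
        exact hsplit ▸ abs_add_le _ _
    _ = (∑ h, |f h| + ∑ h, |g h|) * ∑ h, |f h - g h| := by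
        simp only [sum_add_distrib, ← mul_sum, ← sum_mul]
        ring

theorem sum_sum_mul_abs_mul_sub_mul_le {w : ι → ι → ℝ} {M : ℝ} (hw : ∀ h k, w h k ≤ M)
    (hM : 0 ≤ M) (f g : ι → ℝ) :
    ∑ h, ∑ k, w h k * |f h * f k - g h * g k|
      ≤ M * ((∑ h, |f h| + ∑ h, |g h|) * ∑ h, |f h - g h|) := by
  calc ∑ h, ∑ k, w h k * |f h * f k - g h * g k|
      ≤ ∑ h, ∑ k, M * |f h * f k - g h * g k| :=
        sum_le_sum fun h _ => sum_le_sum fun k _ =>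
          mul_le_mul_of_nonneg_right (hw h k) (abs_nonneg _)
    _ = M * ∑ h, ∑ k, |f h * f k - g h * g k| := by simp only [mul_sum]
    _ ≤ _ := mul_le_mul_of_nonneg_left (sum_sum_abs_mul_sub_mul_le f g) hM

theorem sum_abs_gain_sub_le {η : ι → ι → ℝ} {B : ι → ι → ι → ℝ} (hη : ∀ h k, 0 ≤ η h k)
    (hB : ∀ i h k, 0 ≤ B i h k) (hBsum : ∀ h k, ∑ i, B i h k = 1) (f g : ι → ℝ) :
    ∑ i, |∑ h, ∑ k, η h k * B i h k * f h * f k - ∑ h, ∑ k, η h k * B i h k * g h * g k|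
      ≤ ∑ h, ∑ k, η h k * |f h * f k - g h * g k| := by
  calc ∑ i, |∑ h, ∑ k, η h k * B i h k * f h * f k - ∑ h, ∑ k, η h k * B i h k * g h * g k|
      = ∑ i, |∑ h, ∑ k, η h k * B i h k * (f h * f k - g h * g k)| := by
        simp only [← sum_sub_distrib, mul_sub, mul_assoc]
    _ ≤ ∑ i, ∑ h, ∑ k, η h k * B i h k * |f h * f k - g h * g k| := by
        refine sum_le_sum fun i _ => (abs_sum_le_sum_abs _ _).trans
          (sum_le_sum fun h _ => (abs_sum_le_sum_abs _ _).trans_eq (sum_congr rfl fun k _ => ?_))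
        rw [abs_mul, abs_of_nonneg (mul_nonneg (hη h k) (hB i h k))]
    _ = ∑ h, ∑ k, η h k * |f h * f k - g h * g k| := by
        rw [sum_comm]
        refine sum_congr rfl fun h _ => ?_
        rw [sum_comm]
        refine sum_congr rfl fun k _ => ?_
        rw [← sum_mul, ← mul_sum, hBsum, mul_one]

theorem sum_abs_mul_sum_sub_le (a : ι → ι → ℝ) (f g : ι → ℝ) :
    ∑ i, |f i * ∑ k, a i k * f k - g i * ∑ k, a i k * g k|
      ≤ ∑ i, ∑ k, |a i k| * |f i * f k - g i * g k| := by
  refine sum_le_sum fun i _ => ?_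
  calc |f i * ∑ k, a i k * f k - g i * ∑ k, a i k * g k|
      = |∑ k, a i k * (f i * f k - g i * g k)| := by
        simp only [mul_sum, ← sum_sub_distrib]
        congr 1
        refine sum_congr rfl fun k _ => ?_
        ring
    _ ≤ ∑ k, |a i k| * |f i * f k - g i * g k| := by
        simpa only [abs_mul] using abs_sum_le_sum_abs (fun k => a i k * (f i * f k - g i * g k)) univ

theorem abs_sub_add_add_sub_le (a b c d a' b' c' d' : ℝ) :
    |(a - b + c + d) - (a' - b' + c' + d')|
      ≤ |a - a'| + |b - b'| + |c - c'| + |d - d'| := by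
  rw [abs_le]
  constructor <;>
    linarith [neg_abs_le (a - a'), neg_abs_le (b - b'), neg_abs_le (c - c'), neg_abs_le (d - d'),
      le_abs_self (a - a'), le_abs_self (b - b'), le_abs_self (c - c'), le_abs_self (d - d')]

theorem stmt_5_general (n : ℕ)
    (η : Fin n → Fin n → ℝ) (ηbar : ℝ) (hηbar : 0 < ηbar)
    (hη : ∀ h k, 0 ≤ η h k) (hηle : ∀ h k, η h k ≤ ηbar)
    (B : Fin n → Fin n → Fin n → ℝ) (hB : ∀ i h k, 0 ≤ B i h k)
    (hBsum : ∀ h k, ∑ i, B i h k = 1)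
    (μ : Fin n → Fin n → ℝ) (μbar : ℝ) (hμbar : 0 < μbar)
    (hμle : ∀ i k, |μ i k| ≤ μbar)
    (lam : Fin n → ℝ) (lambar : ℝ)
    (hlamle : ∀ i, |lam i| ≤ lambar)
    (c : ℝ) (f g : Fin n → ℝ)
    (hf : ∑ h, |f h| ≤ c) (hg : ∑ h, |g h| ≤ c) :
    ∑ i, |((∑ h, ∑ k, η h k * B i h k * f h * f k)
            - f i * (∑ k, η i k * f k)
            + f i * (∑ k, η i k * μ i k * f k)
            + lam i * f i)
          - ((∑ h, ∑ k, η h k * B i h k * g h * g k)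
            - g i * (∑ k, η i k * g k)
            + g i * (∑ k, η i k * μ i k * g k)
            + lam i * g i)|
      ≤ (4 * ηbar * c + 2 * ηbar * μbar * c + lambar) * ∑ i, |f i - g i| := by
  set D := ∑ i, |f i - g i|
  set S := (∑ h, |f h| + ∑ h, |g h|) * D
  have hS : S ≤ 2 * c * D := by
    have hD : 0 ≤ D := sum_nonneg fun i _ => abs_nonneg _
    linarith [mul_le_mul_of_nonneg_right (add_le_add hf hg) hD]
  have hgain := (sum_abs_gain_sub_le hη hB hBsum f g).trans
    (sum_sum_mul_abs_mul_sub_mul_le hηle hηbar.le f g)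
  have hloss := (sum_abs_mul_sum_sub_le η f g).trans
    (sum_sum_mul_abs_mul_sub_mul_le (fun i k => (abs_of_nonneg (hη i k)).trans_le (hηle i k))
      hηbar.le f g)
  have hprol := (sum_abs_mul_sum_sub_le (fun i k => η i k * μ i k) f g).trans
    (sum_sum_mul_abs_mul_sub_mul_le
      (fun i k => by rw [abs_mul, abs_of_nonneg (hη i k)]; gcongr; exacts [hηle i k, hμle i k])
      (mul_nonneg hηbar.le hμbar.le) f g)
  have hfield : ∑ i, |lam i * f i - lam i * g i| ≤ lambar * D := by
    rw [mul_sum]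
    refine sum_le_sum fun i _ => ?_
    rw [← mul_sub, abs_mul]
    exact mul_le_mul_of_nonneg_right (hlamle i) (abs_nonneg _)
  calc _ ≤ ∑ i, (|∑ h, ∑ k, η h k * B i h k * f h * f k - ∑ h, ∑ k, η h k * B i h k * g h * g k|
          + |f i * ∑ k, η i k * f k - g i * ∑ k, η i k * g k|
          + |f i * ∑ k, η i k * μ i k * f k - g i * ∑ k, η i k * μ i k * g k|
          + |lam i * f i - lam i * g i|) :=
        sum_le_sum fun i _ => abs_sub_add_add_sub_le _ _ _ _ _ _ _ _
    _ ≤ ηbar * S + ηbar * S + ηbar * μbar * S + lambar * D := by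
        simp only [sum_add_distrib]
        gcongr
    _ ≤ _ := by
        linarith [mul_le_mul_of_nonneg_left hS hηbar.le,
          mul_le_mul_of_nonneg_left hS (mul_nonneg hηbar.le hμbar.le)]

/-- Combined Lipschitz estimate for the full kinetic operator P (inequalities
(eqth16)-(eqth17) in the proof of Theorem 1); in particular P is locally
Lipschitz with respect to the ℓ¹ norm. -/
theorem stmt_5 (n : ℕ) (hn : 1 ≤ n)
    (η : Fin n → Fin n → ℝ) (ηbar : ℝ) (hηbar : 0 < ηbar)
    (hη : ∀ h k, 0 ≤ η h k) (hηle : ∀ h k, η h k ≤ ηbar)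
    (B : Fin n → Fin n → Fin n → ℝ) (hB : ∀ i h k, 0 ≤ B i h k)
    (hBsum : ∀ h k, ∑ i, B i h k = 1)
    (μ : Fin n → Fin n → ℝ) (μbar : ℝ) (hμbar : 0 < μbar)
    (hμle : ∀ i k, |μ i k| ≤ μbar)
    (lam : Fin n → ℝ) (lambar : ℝ) (hlambar : 0 < lambar)
    (hlamle : ∀ i, |lam i| ≤ lambar)
    (c : ℝ) (hc : 0 < c) (f g : Fin n → ℝ)
    (hf : ∑ h, |f h| ≤ c) (hg : ∑ h, |g h| ≤ c) :
    ∑ i, |((∑ h, ∑ k, η h k * B i h k * f h * f k)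
            - f i * (∑ k, η i k * f k)
            + f i * (∑ k, η i k * μ i k * f k)
            + lam i * f i)
          - ((∑ h, ∑ k, η h k * B i h k * g h * g k)
            - g i * (∑ k, η i k * g k)
            + g i * (∑ k, η i k * μ i k * g k)
            + lam i * g i)|
      ≤ (4 * ηbar * c + 2 * ηbar * μbar * c + lambar) * ∑ i, |f i - g i| :=
  stmt_5_general n η ηbar hηbar hη hηle B hB hBsum μ μbar hμbar hμle lam lambar hlamle c f g hf hg
end

section
/- Let n ∈ ℕ, n ≥ 1, let η : Fin n → Fin n → ℝ, let B : Fin n → Fin n → Fin n → ℝ satisfy ∑_{i} B i h k = 1 for all h, k, let μ : Fin n → Fin n → ℝ → ℝ and λ : Fin n → ℝ → ℝ, and suppose f : ℝ → (Fin n → ℝ) is differentiable on an interval [0, t₀] and satisfies for all t ∈ [0, t₀] and all i the kinetic equation (f i)'(t) = ∑_{h,k} η h k · B i h k · f h t · f k t − f i t · ∑_{k} η i k · f k t + f i t · ∑_{k} η i k · μ i k t · f k t + λ i t · f i t. Then the total density ρ(t) = ∑_{i} f i t satisfies, for all t ∈ [0, t₀], ρ'(t) = ∑_{i} f i t · ( ∑_{k}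 η i k · μ i k t · f k t + λ i t ). -/
open Set

/-!
Summing the kinetic equations over `i`, the gain term cancels the loss term because the
outcome probabilities `B · h k` of every interaction sum to one; only the non-conservative
terms survive.
-/

section KineticSums

variable {ι R : Type*} [Fintype ι]

theorem sum_gain_eq_sum_loss [CommSemiring R] (η : ι → ι → R) (B : ι → ι → ι → R)
    (hB : ∀ h k, ∑ i, B i h k = 1) (x : ι → R) :
    ∑ i, ∑ h, ∑ k, η h k * B i h k * x h * x k = ∑ i, x i * ∑ k, η i k * x k := by
  rw [Finset.sum_comm]
  refine Finset.sum_congr rfl fun h _ => ?_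
  rw [Finset.sum_comm, Finset.mul_sum]
  refine Finset.sum_congr rfl fun k _ => ?_
  calc ∑ i, η h k * B i h k * x h * x k = η h k * (∑ i, B i h k) * x h * x k := by
        simp only [Finset.mul_sum, Finset.sum_mul]
    _ = x h * (η h k * x k) := by rw [hB]; ring

theorem sum_kinetic_rhs_eq [CommRing R] (η : ι → ι → R) (B : ι → ι → ι → R)
    (hB : ∀ h k, ∑ i, B i h k = 1) (m : ι → ι → R) (l : ι → R) (x : ι → R) :
    ∑ i, ((∑ h, ∑ k, η h k * B i h k * x h * x k) - x i * (∑ k, η i k * x k)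
        + x i * (∑ k, η i k * m i k * x k) + l i * x i)
      = ∑ i, x i * ((∑ k, η i k * m i k * x k) + l i) := by
  simp only [Finset.sum_add_distrib, Finset.sum_sub_distrib, sum_gain_eq_sum_loss η B hB,
    sub_self, zero_add, mul_add, mul_comm (l _)]

end KineticSums

theorem stmt_7_general (n : ℕ) (t₀ : ℝ)
    (η : Fin n → Fin n → ℝ) (B : Fin n → Fin n → Fin n → ℝ)
    (hBsum : ∀ h k, ∑ i, B i h k = 1)
    (μ : Fin n → Fin n → ℝ → ℝ) (lam : Fin n → ℝ → ℝ)
    (f : ℝ → Fin n → ℝ)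
    (hf : ∀ t ∈ Icc (0:ℝ) t₀, ∀ i,
      HasDerivWithinAt (fun s => f s i)
        ((∑ h, ∑ k, η h k * B i h k * f t h * f t k)
          - f t i * (∑ k, η i k * f t k)
          + f t i * (∑ k, η i k * μ i k t * f t k)
          + lam i t * f t i) (Icc (0:ℝ) t₀) t) :
    ∀ t ∈ Icc (0:ℝ) t₀,
      HasDerivWithinAt (fun s => ∑ i, f s i)
        (∑ i, f t i * ((∑ k, η i k * μ i k t * f t k) + lam i t))
        (Icc (0:ℝ) t₀) t := by
  intro t ht
  rw [← sum_kinetic_rhs_eq η B hBsum (fun i k => μ i k t) (fun i => lam i t) (f t)]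
  exact HasDerivWithinAt.fun_sum fun i _ => hf t ht i

/-- Evolution equation for the total density ρ(t) = ∑ i, f i t:
ρ'(t) = ∑_i f_i(t) (∑_k η_{ik} μ_{ik}(t) f_k(t) + λ_i(t)). -/
theorem stmt_7 (n : ℕ) (hn : 1 ≤ n) (t₀ : ℝ)
    (η : Fin n → Fin n → ℝ) (B : Fin n → Fin n → Fin n → ℝ)
    (hBsum : ∀ h k, ∑ i, B i h k = 1)
    (μ : Fin n → Fin n → ℝ → ℝ) (lam : Fin n → ℝ → ℝ)
    (f : ℝ → Fin n → ℝ)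
    (hf : ∀ t ∈ Icc (0:ℝ) t₀, ∀ i,
      HasDerivWithinAt (fun s => f s i)
        ((∑ h, ∑ k, η h k * B i h k * f t h * f t k)
          - f t i * (∑ k, η i k * f t k)
          + f t i * (∑ k, η i k * μ i k t * f t k)
          + lam i t * f t i) (Icc (0:ℝ) t₀) t) :
    ∀ t ∈ Icc (0:ℝ) t₀,
      HasDerivWithinAt (fun s => ∑ i, f s i)
        (∑ i, f t i * ((∑ k, η i k * μ i k t * f t k) + lam i t))
        (Icc (0:ℝ) t₀) t :=
  stmt_7_general n t₀ η B hBsum μ lam f hf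
end

section
/- Let n ∈ ℕ, n ≥ 1, let η : Fin n → Fin n → ℝ, let B : Fin n → Fin n → Fin n → ℝ satisfy ∑_{i} B i h k = 1 for all h, k, and suppose μ i k t = 0 for all i, k, t and λ i t = 0 for all i, t (the conservative case). If f : ℝ → (Fin n → ℝ) is differentiable on [0, t₀] and satisfies for all t ∈ [0, t₀] and all i the equation (f i)'(t) = ∑_{h,k} η h k · B i h k · f h t · f k t − f i t · ∑_{k} η i k · f k t, then the total density is conserved: ∑_{i} f i t = ∑_{i} f i 0 for all t ∈ [0, t₀]. In particular, if ∑_{i} f i 0 = 1, then ∑_{i} f i t = 1 for all t ∈ [0, t₀]. -/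
/-!
Summing the kinetic equations over `i`, the gain term collapses to `∑ h k, η h k f_h f_k`
because `∑ i, B i h k = 1`, and this is exactly the loss term. So `∑ i, f i` has zero
derivative on `[0, t₀]` and is constant there.
-/

open Set Finset

theorem sum_gain_sub_loss_eq_zero {ι R : Type*} [Fintype ι] [CommRing R]
    (η : ι → ι → R) (B : ι → ι → ι → R) (hB : ∀ h k, ∑ i, B i h k = 1) (x : ι → R) :
    ∑ i, ((∑ h, ∑ k, η h k * B i h k * x h * x k) - x i * ∑ k, η i k * x k) = 0 := by
  have gain : ∑ i, ∑ h, ∑ k, η h k * B i h k * x h * x k = ∑ h, ∑ k, η h k * x h * x k := by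
    rw [sum_comm]
    refine sum_congr rfl fun h _ => ?_
    rw [sum_comm]
    refine sum_congr rfl fun k _ => ?_
    calc ∑ i, η h k * B i h k * x h * x k = (∑ i, B i h k) * (η h k * x h * x k) := by
          rw [sum_mul]; exact sum_congr rfl fun i _ => by ring
      _ = η h k * x h * x k := by rw [hB, one_mul]
  rw [sum_sub_distrib, gain, sub_eq_zero]
  exact sum_congr rfl fun h _ => by rw [mul_sum]; exact sum_congr rfl fun k _ => by ring

theorem eq_of_hasDerivWithinAt_zero_Icc {E : Type*} [NormedAddCommGroup E] [NormedSpace ℝ E]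
    {f : ℝ → E} {a b : ℝ} (hf : ∀ x ∈ Icc a b, HasDerivWithinAt f 0 (Icc a b) x) :
    ∀ x ∈ Icc a b, f x = f a :=
  constant_of_has_deriv_right_zero (fun x hx => (hf x hx).continuousWithinAt) fun x hx =>
    (hf x (Ico_subset_Icc_self hx)).mono_of_mem_nhdsWithin (Icc_mem_nhdsGE_of_mem hx)

theorem stmt_8_general (n : ℕ) (t₀ : ℝ)
    (η : Fin n → Fin n → ℝ) (B : Fin n → Fin n → Fin n → ℝ)
    (hBsum : ∀ h k, ∑ i, B i h k = 1)
    (f : ℝ → Fin n → ℝ)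
    (hf : ∀ t ∈ Icc (0:ℝ) t₀, ∀ i,
      HasDerivWithinAt (fun s => f s i)
        ((∑ h, ∑ k, η h k * B i h k * f t h * f t k)
          - f t i * (∑ k, η i k * f t k)) (Icc (0:ℝ) t₀) t) :
    (∀ t ∈ Icc (0:ℝ) t₀, ∑ i, f t i = ∑ i, f 0 i) ∧
    ((∑ i, f 0 i) = 1 → ∀ t ∈ Icc (0:ℝ) t₀, ∑ i, f t i = 1) := by
  have hmass : ∀ t ∈ Icc (0:ℝ) t₀,
      HasDerivWithinAt (fun s => ∑ i, f s i) 0 (Icc (0:ℝ) t₀) t := fun t ht => by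
    simpa only [sum_gain_sub_loss_eq_zero η B hBsum (f t)] using
      HasDerivWithinAt.fun_sum (u := univ) fun i _ => hf t ht i
  have hconst := eq_of_hasDerivWithinAt_zero_Icc hmass
  exact ⟨hconst, fun h1 t ht => (hconst t ht).trans h1⟩

/-- In the conservative case (μ ≡ 0, λ ≡ 0) the total density is conserved; in
particular if it equals 1 initially it equals 1 for all times. -/
theorem stmt_8 (n : ℕ) (hn : 1 ≤ n) (t₀ : ℝ)
    (η : Fin n → Fin n → ℝ) (B : Fin n → Fin n → Fin n → ℝ)
    (hBsum : ∀ h k, ∑ i, B i h k = 1)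
    (μ : Fin n → Fin n → ℝ → ℝ) (lam : Fin n → ℝ → ℝ)
    (hμ : ∀ i k t, μ i k t = 0) (hlam : ∀ i t, lam i t = 0)
    (f : ℝ → Fin n → ℝ)
    (hf : ∀ t ∈ Icc (0:ℝ) t₀, ∀ i,
      HasDerivWithinAt (fun s => f s i)
        ((∑ h, ∑ k, η h k * B i h k * f t h * f t k)
          - f t i * (∑ k, η i k * f t k)) (Icc (0:ℝ) t₀) t) :
    (∀ t ∈ Icc (0:ℝ) t₀, ∑ i, f t i = ∑ i, f 0 i) ∧
    ((∑ i, f 0 i) = 1 → ∀ t ∈ Icc (0:ℝ) t₀, ∑ i, f t i = 1) :=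
  stmt_8_general n t₀ η B hBsum f hf
end

section
/- Let n ∈ ℕ, n ≥ 1, let η : Fin n → Fin n → ℝ be nonnegative, let B : Fin n → Fin n → Fin n → ℝ be nonnegative with ∑_{i} B i h k = 1 for all h, k, let μ : Fin n → Fin n → ℝ → ℝ and λ : Fin n → ℝ → ℝ be continuous on [0, t₀], and let f : ℝ → (Fin n → ℝ) be differentiable on [0, t₀] satisfying for all t ∈ [0, t₀] and all i the kinetic equation (f i)'(t) = ∑_{h,k} η h k · B i h k · f h t · f k t − f i t · ∑_{k} η i k · f k t + f i t · ∑_{k} η i k · μ i k t · f k t + λ i t · f i t. If f i 0 ≥ 0 for all i, then f i t ≥ 0 for all i and all t ∈ [0, t₀]. -/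
open Set Filter Topology

private lemma prod_lb {a b c M : ℝ} (hc : 0 ≤ c) (hM : 0 ≤ M)
    (ha : -c ≤ a) (ha' : a ≤ M) (hb : -c ≤ b) (hb' : b ≤ M) :
    -(c * M) ≤ a * b := by
  rcases le_or_gt 0 a with h1 | h1
  · nlinarith
  · nlinarith

/-- Positivity part of Theorem 1: nonnegative initial data yield nonnegative
solutions of the kinetic system on [0, t₀]. -/
theorem stmt_10 (n : ℕ) (hn : 1 ≤ n) (t₀ : ℝ)
    (η : Fin n → Fin n → ℝ) (hη : ∀ h k, 0 ≤ η h k)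
    (B : Fin n → Fin n → Fin n → ℝ) (hB : ∀ i h k, 0 ≤ B i h k)
    (hBsum : ∀ h k, ∑ i, B i h k = 1)
    (μ : Fin n → Fin n → ℝ → ℝ) (lam : Fin n → ℝ → ℝ)
    (hμcont : ∀ i k, ContinuousOn (μ i k) (Icc 0 t₀))
    (hlamcont : ∀ i, ContinuousOn (lam i) (Icc 0 t₀))
    (f : ℝ → Fin n → ℝ)
    (hf : ∀ t ∈ Icc (0:ℝ) t₀, ∀ i,
      HasDerivWithinAt (fun s => f s i)
        ((∑ h, ∑ k, η h k * B i h k * f t h * f t k)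
          - f t i * (∑ k, η i k * f t k)
          + f t i * (∑ k, η i k * μ i k t * f t k)
          + lam i t * f t i) (Icc (0:ℝ) t₀) t)
    (hf0 : ∀ i, 0 ≤ f 0 i) :
    ∀ t ∈ Icc (0:ℝ) t₀, ∀ i, 0 ≤ f t i := by
  intro t ht i
  have ht₀ : (0:ℝ) ≤ t₀ := le_trans ht.1 ht.2
  have h0mem : (0:ℝ) ∈ Icc (0:ℝ) t₀ := ⟨le_refl 0, ht₀⟩
  -- continuity of the solution
  have hfc : ∀ j, ContinuousOn (fun s => f s j) (Icc (0:ℝ) t₀) :=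
    fun j s hs => (hf s hs j).continuousWithinAt
  have hfC : ContinuousOn f (Icc (0:ℝ) t₀) := continuousOn_pi.2 hfc
  -- bound on the solution
  obtain ⟨M, hM⟩ := (isCompact_Icc).exists_bound_of_continuousOn hfC
  have hM' : ∀ s ∈ Icc (0:ℝ) t₀, ∀ j, |f s j| ≤ M := fun s hs j => by
    rw [← Real.norm_eq_abs]
    exact le_trans (norm_le_pi_norm (f s) j) (hM s hs)
  have hM0 : 0 ≤ M := le_trans (norm_nonneg _) (hM 0 h0mem)
  -- bound on μ
  obtain ⟨Cμ, hCμ⟩ := (isCompact_Icc).exists_bound_of_continuousOn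
    (show ContinuousOn (fun s (p : Fin n × Fin n) => μ p.1 p.2 s) (Icc (0:ℝ) t₀) from
      continuousOn_pi.2 fun p => hμcont p.1 p.2)
  have hCμ' : ∀ s ∈ Icc (0:ℝ) t₀, ∀ i k, |μ i k s| ≤ Cμ := fun s hs i k => by
    rw [← Real.norm_eq_abs]
    exact le_trans (norm_le_pi_norm (fun p : Fin n × Fin n => μ p.1 p.2 s) (i, k)) (hCμ s hs)
  have hCμ0 : 0 ≤ Cμ := le_trans (norm_nonneg _) (hCμ 0 h0mem)
  -- bound on lam
  obtain ⟨Cl, hCl⟩ := (isCompact_Icc).exists_bound_of_continuousOn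
    (show ContinuousOn (fun s (j : Fin n) => lam j s) (Icc (0:ℝ) t₀) from
      continuousOn_pi.2 fun j => hlamcont j)
  have hCl' : ∀ s ∈ Icc (0:ℝ) t₀, ∀ j, |lam j s| ≤ Cl := fun s hs j => by
    rw [← Real.norm_eq_abs]
    exact le_trans (norm_le_pi_norm (fun j : Fin n => lam j s) j) (hCl s hs)
  have hCl0 : 0 ≤ Cl := le_trans (norm_nonneg _) (hCl 0 h0mem)
  -- bound on η
  set Cη : ℝ := ‖η‖ with hCηdef
  have hCη : ∀ h k, η h k ≤ Cη := fun h k =>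
    le_trans (le_abs_self _) (by
      rw [← Real.norm_eq_abs]
      exact le_trans (norm_le_pi_norm (η h) k) (norm_le_pi_norm η h))
  have hCη0 : 0 ≤ Cη := norm_nonneg _
  have hB1 : ∀ i h k, B i h k ≤ 1 := by
    intro i h k
    rw [← hBsum h k]
    exact Finset.single_le_sum (fun j _ => hB j h k) (Finset.mem_univ i)
  -- the Gronwall constant
  set K : ℝ := Cη * M * (n:ℝ) ^ 2 + Cη * M * (n:ℝ) + Cη * Cμ * M * (n:ℝ) + Cl + 1 with hKdef
  have hK0 : 0 < K := by
    have hn0 : (0:ℝ) ≤ (n:ℝ) := Nat.cast_nonneg n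
    nlinarith [mul_nonneg (mul_nonneg hCη0 hM0) (sq_nonneg (n:ℝ)),
      mul_nonneg (mul_nonneg hCη0 hM0) hn0,
      mul_nonneg (mul_nonneg (mul_nonneg hCη0 hCμ0) hM0) hn0]
  -- the barrier
  set ψ : ℝ → ℝ := fun s => Real.exp (K * s) with hψdef
  have hψpos : ∀ s, 0 < ψ s := fun s => Real.exp_pos _
  have hψ' : ∀ s, HasDerivAt ψ (K * ψ s) s := by
    intro s
    have h1 : HasDerivAt (fun u : ℝ => K * u) K s := by
      simpa using (hasDerivAt_id s).const_mul K
    simpa [hψdef, mul_comm] using h1.exp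
  have hψcont : Continuous ψ := by
    rw [hψdef]
    exact Real.continuous_exp.comp (continuous_const.mul continuous_id)
  -- main claim : strict barrier bound for every ε > 0
  have key : ∀ ε : ℝ, 0 < ε → ∀ s ∈ Icc (0:ℝ) t₀, ∀ j, 0 < f s j + ε * ψ s := by
    intro ε hε
    by_contra hcon
    push_neg at hcon
    obtain ⟨s₀, hs₀, j₀', hj₀'⟩ := hcon
    have hψc : Continuous fun s => ε * ψ s := continuous_const.mul hψcont
    set S : Set ℝ :=
      ⋃ j : Fin n, (Icc (0:ℝ) t₀ ∩ (fun s => f s j + ε * ψ s) ⁻¹' Iic 0) with hSdef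
    have hSclosed : IsClosed S := by
      rw [hSdef]
      exact isClosed_iUnion_of_finite fun j =>
        ContinuousOn.preimage_isClosed_of_isClosed
          ((hfc j).add hψc.continuousOn) isClosed_Icc isClosed_Iic
    have hSne : S.Nonempty := by
      refine ⟨s₀, ?_⟩
      rw [hSdef]
      exact Set.mem_iUnion.2 ⟨j₀', hs₀, hj₀'⟩
    have hSmem : ∀ s ∈ S, s ∈ Icc (0:ℝ) t₀ ∧ ∃ j, f s j + ε * ψ s ≤ 0 := by
      intro s hs
      rw [hSdef] at hs
      obtain ⟨j, hj1, hj2⟩ := Set.mem_iUnion.1 hs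
      exact ⟨hj1, j, hj2⟩
    have hSbdd : BddBelow S := ⟨0, fun s hs => (hSmem s hs).1.1⟩
    set T := sInf S with hTdef
    have hTS : T ∈ S := hSclosed.csInf_mem hSne hSbdd
    obtain ⟨hTmem, j₀, hj₀⟩ := hSmem T hTS
    have hTpos : 0 < T := by
      rcases lt_or_eq_of_le hTmem.1 with h1 | h1
      · exact h1
      · exfalso
        have h2 := hf0 j₀
        rw [← h1] at hj₀
        have hψ0 : ψ 0 = 1 := by simp [hψdef]
        rw [hψ0] at hj₀
        nlinarith
    have hpre : ∀ s, 0 ≤ s → s < T → ∀ j, 0 < f s j + ε * ψ s := by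
      intro s hs0 hsT j
      by_contra hcon2
      push_neg at hcon2
      have hsS : s ∈ S := by
        rw [hSdef]
        exact Set.mem_iUnion.2 ⟨j, ⟨hs0, le_trans hsT.le hTmem.2⟩, hcon2⟩
      exact absurd (csInf_le hSbdd hsS) (not_le.mpr hsT)
    have hTge : ∀ j, 0 ≤ f T j + ε * ψ T := by
      intro j
      have hcw : ContinuousWithinAt (fun s => f s j + ε * ψ s) (Icc (0:ℝ) t₀) T :=
        ((hfc j).add hψc.continuousOn) T hTmem
      have hne : (𝓝[Ioo (0:ℝ) T] T).NeBot := right_nhdsWithin_Ioo_neBot hTpos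
      have hsub : Ioo (0:ℝ) T ⊆ Icc (0:ℝ) t₀ := fun x hx =>
        ⟨hx.1.le, le_trans hx.2.le hTmem.2⟩
      have htend : Filter.Tendsto (fun s => f s j + ε * ψ s) (𝓝[Ioo (0:ℝ) T] T)
          (𝓝 (f T j + ε * ψ T)) := hcw.tendsto.mono_left (nhdsWithin_mono T hsub)
      exact ge_of_tendsto htend
        (Filter.eventually_of_mem self_mem_nhdsWithin fun x hx => (hpre x hx.1.le hx.2 j).le)
    set c : ℝ := ε * ψ T with hcdef
    have hc : 0 < c := mul_pos hε (hψpos T)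
    have heq : f T j₀ = -c := le_antisymm (by linarith) (by linarith [hTge j₀])
    have hfl : ∀ k, -c ≤ f T k := fun k => by linarith [hTge k]
    have hfu : ∀ k, f T k ≤ M := fun k => (abs_le.1 (hM' T hTmem k)).2
    have hfl' : ∀ k, -M ≤ f T k := fun k => (abs_le.1 (hM' T hTmem k)).1
    -- bound the gain term from below
    have hgain : -((n:ℝ) ^ 2 * (Cη * (c * M))) ≤
        ∑ h, ∑ k, η h k * B j₀ h k * f T h * f T k := by
      have hterm : ∀ h k : Fin n,
          -(Cη * (c * M)) ≤ η h k * B j₀ h k * f T h * f T k := by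
        intro h k
        have hp : -(c * M) ≤ f T h * f T k :=
          prod_lb hc.le hM0 (hfl h) (hfu h) (hfl k) (hfu k)
        have hr0 : 0 ≤ η h k * B j₀ h k := mul_nonneg (hη h k) (hB j₀ h k)
        have hr1 : η h k * B j₀ h k ≤ Cη := by
          calc η h k * B j₀ h k ≤ η h k * 1 :=
                mul_le_mul_of_nonneg_left (hB1 j₀ h k) (hη h k)
            _ = η h k := mul_one _
            _ ≤ Cη := hCη h k
        calc -(Cη * (c * M)) ≤ (η h k * B j₀ h k) * (-(c * M)) := by
              nlinarith [mul_le_mul_of_nonneg_right hr1 (mul_nonneg hc.le hM0)]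
          _ ≤ (η h k * B j₀ h k) * (f T h * f T k) :=
              mul_le_mul_of_nonneg_left hp hr0
          _ = η h k * B j₀ h k * f T h * f T k := by ring
      calc -((n:ℝ) ^ 2 * (Cη * (c * M)))
          = ∑ _h : Fin n, ∑ _k : Fin n, -(Cη * (c * M)) := by
            rw [Finset.sum_const, Finset.sum_const, Finset.card_univ, Fintype.card_fin,
              nsmul_eq_mul, nsmul_eq_mul]
            ring
        _ ≤ _ := Finset.sum_le_sum fun h _ => Finset.sum_le_sum fun k _ => hterm h k
    -- bound the linear sums
    have hS1 : -((n:ℝ) * (Cη * M)) ≤ ∑ k, η j₀ k * f T k := by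
      have hterm : ∀ k : Fin n, -(Cη * M) ≤ η j₀ k * f T k := by
        intro k
        nlinarith [hη j₀ k, hCη j₀ k, hfl' k, hfu k, hM0]
      calc -((n:ℝ) * (Cη * M)) = ∑ _k : Fin n, -(Cη * M) := by
            rw [Finset.sum_const, Finset.card_univ, Fintype.card_fin, nsmul_eq_mul]; ring
        _ ≤ _ := Finset.sum_le_sum fun k _ => hterm k
    have hS2 : (∑ k, η j₀ k * μ j₀ k T * f T k) ≤ (n:ℝ) * (Cη * (Cμ * M)) := by
      have hterm : ∀ k : Fin n, η j₀ k * μ j₀ k T * f T k ≤ Cη * (Cμ * M) := by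
        intro k
        have habs : |μ j₀ k T * f T k| ≤ Cμ * M := by
          rw [abs_mul]
          exact mul_le_mul (hCμ' T hTmem j₀ k) (hM' T hTmem k) (abs_nonneg _) hCμ0
        calc η j₀ k * μ j₀ k T * f T k = η j₀ k * (μ j₀ k T * f T k) := by ring
          _ ≤ η j₀ k * (Cμ * M) :=
              mul_le_mul_of_nonneg_left (abs_le.1 habs).2 (hη j₀ k)
          _ ≤ Cη * (Cμ * M) :=
              mul_le_mul_of_nonneg_right (hCη j₀ k) (mul_nonneg hCμ0 hM0)
      calc (∑ k, η j₀ k * μ j₀ k T * f T k) ≤ ∑ _k : Fin n, Cη * (Cμ * M) :=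
            Finset.sum_le_sum fun k _ => hterm k
        _ = (n:ℝ) * (Cη * (Cμ * M)) := by
            rw [Finset.sum_const, Finset.card_univ, Fintype.card_fin, nsmul_eq_mul]
    have hlamle : lam j₀ T ≤ Cl := (abs_le.1 (hCl' T hTmem j₀)).2
    -- the derivative of the barrier-shifted function at T is positive
    have hd := hf T hTmem j₀
    have hψT' : HasDerivWithinAt (fun s => ε * ψ s) (ε * (K * ψ T)) (Icc (0:ℝ) t₀) T :=
      ((hψ' T).const_mul ε).hasDerivWithinAt
    have hg' : HasDerivWithinAt (fun s => f s j₀ + ε * ψ s)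
        (((∑ h, ∑ k, η h k * B j₀ h k * f T h * f T k)
          - f T j₀ * (∑ k, η j₀ k * f T k)
          + f T j₀ * (∑ k, η j₀ k * μ j₀ k T * f T k)
          + lam j₀ T * f T j₀) + ε * (K * ψ T)) (Icc (0:ℝ) t₀) T := hd.add hψT'
    have hDpos : 0 < ((∑ h, ∑ k, η h k * B j₀ h k * f T h * f T k)
          - f T j₀ * (∑ k, η j₀ k * f T k)
          + f T j₀ * (∑ k, η j₀ k * μ j₀ k T * f T k)
          + lam j₀ T * f T j₀) + ε * (K * ψ T) := by
      rw [heq]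
      have hck : ε * (K * ψ T) = c * K := by rw [hcdef]; ring
      rw [hck, hKdef]
      nlinarith [hgain, mul_le_mul_of_nonneg_left hS1 hc.le,
        mul_le_mul_of_nonneg_left hS2 hc.le,
        mul_le_mul_of_nonneg_left hlamle hc.le]
    -- but the left slope at T is nonpositive : contradiction
    have hgmono := hg'.mono (Icc_subset_Icc le_rfl hTmem.2)
    rw [hasDerivWithinAt_iff_tendsto_slope] at hgmono
    have hsub2 : Ioo (0:ℝ) T ⊆ Icc (0:ℝ) T \ {T} := fun x hx =>
      ⟨⟨hx.1.le, hx.2.le⟩, ne_of_lt hx.2⟩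
    have hne : (𝓝[Ioo (0:ℝ) T] T).NeBot := right_nhdsWithin_Ioo_neBot hTpos
    have htends := hgmono.mono_left (nhdsWithin_mono T hsub2)
    have hgT : f T j₀ + ε * ψ T = 0 := by rw [heq, ← hcdef]; ring
    have hD'le : ((∑ h, ∑ k, η h k * B j₀ h k * f T h * f T k)
          - f T j₀ * (∑ k, η j₀ k * f T k)
          + f T j₀ * (∑ k, η j₀ k * μ j₀ k T * f T k)
          + lam j₀ T * f T j₀) + ε * (K * ψ T) ≤ 0 := by
      refine le_of_tendsto htends
        (Filter.eventually_of_mem self_mem_nhdsWithin fun x hx => ?_)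
      have hgx : 0 ≤ f x j₀ + ε * ψ x := (hpre x hx.1.le hx.2 j₀).le
      have hxT : x - T < 0 := sub_neg.mpr hx.2
      rw [slope_def_field]
      rw [hgT]
      apply div_nonpos_of_nonneg_of_nonpos
      · linarith
      · linarith
    linarith
  -- conclude by letting ε → 0
  by_contra hneg
  push_neg at hneg
  have hψt := hψpos t
  have hε : 0 < -f t i / ψ t := div_pos (neg_pos.mpr hneg) hψt
  have hkey := key _ hε t ht i
  rw [div_mul_cancel₀ _ (ne_of_gt hψt)] at hkey
  linarith
end
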